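/- arXiv:2605.05506 — 4 statements merged into one kernel-verified Lean document; each statement's English description precedes it below -/
import Mathlib

section
/- Let t be an odd natural number with t ≥ 1, and let s be a natural number with s ≥ t. Then s can be written as a sum of at most two natural numbers each coprime to t; that is, either gcd(s, t) = 1, or there exist positive natural numbers a, b with a + b = s, gcd(a, t) = 1, and gcd(b, t) = 1. -/
/-!
Modulo an odd `t`, halve `s + c` and `s - c`, where `c` is the product of the primes dividing `t`
but not `s`: every prime `p ∣ t` divides exactly one of `s` and `c`, so it divides neither `s + c`
nor `s - c`, and the two halves are units adding up to `s`. Their least residues, both below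
`t ≤ s`, give the required summands.
-/

lemma Int.isCoprime_of_forall_prime_dvd {x : ℤ} {t : ℕ}
    (h : ∀ p : ℕ, p.Prime → p ∣ t → ¬ (p : ℤ) ∣ x) : IsCoprime (t : ℤ) x := by
  rw [Int.isCoprime_iff_nat_coprime]
  exact Nat.coprime_of_dvd fun p hp hpt hpx =>
    h p hp (by simpa using hpt) (Int.natCast_dvd.mpr hpx)

lemma Int.exists_prime_dvd_iff_not_dvd (s : ℤ) {t : ℕ} (ht : t ≠ 0) :
    ∃ c : ℤ, ∀ p : ℕ, p.Prime → p ∣ t → ((p : ℤ) ∣ c ↔ ¬ (p : ℤ) ∣ s) := by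
  refine ⟨∏ q ∈ t.primeFactors with ¬ ((q : ℕ) : ℤ) ∣ s, (q : ℤ), fun p hp hpt => ?_⟩
  rw [(Nat.prime_iff_prime_int.mp hp).dvd_finsetProd_iff]
  constructor
  · rintro ⟨q, hq, hpq⟩
    rw [Finset.mem_filter, Nat.mem_primeFactors] at hq
    rw [(Nat.prime_dvd_prime_iff_eq hp hq.1.1).mp (Int.natCast_dvd_natCast.mp hpq)]
    exact hq.2
  · exact fun hps => ⟨p, Finset.mem_filter.mpr ⟨Nat.mem_primeFactors.mpr ⟨hp, hpt, ht⟩, hps⟩,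
      dvd_rfl⟩

lemma not_dvd_add_and_not_dvd_sub {R : Type*} [Ring R] {p s c : R} (h : p ∣ c ↔ ¬ p ∣ s) :
    ¬ p ∣ s + c ∧ ¬ p ∣ s - c := by
  by_cases hs : p ∣ s
  · rw [dvd_add_right hs, dvd_sub_right hs]
    exact ⟨h.not.mpr (not_not.mpr hs), h.not.mpr (not_not.mpr hs)⟩
  · have hc := h.mpr hs
    rw [dvd_add_left hc, dvd_sub_left hc]
    exact ⟨hs, hs⟩

theorem ZMod.exists_isUnit_add_isUnit_eq {n : ℕ} (hn : Odd n) (x : ZMod n) :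
    ∃ u v : ZMod n, IsUnit u ∧ IsUnit v ∧ u + v = x := by
  obtain ⟨c, hc⟩ := Int.exists_prime_dvd_iff_not_dvd (x.cast : ℤ) hn.pos.ne'
  have hunit (y : ℤ) (hy : ∀ p : ℕ, p.Prime → p ∣ n → ¬ (p : ℤ) ∣ y) : IsUnit (y : ZMod n) :=
    (ZMod.coe_int_isUnit_iff_isCoprime y n).mpr (Int.isCoprime_of_forall_prime_dvd hy)
  have htwo : IsUnit (2 : ZMod n) := by
    exact_mod_cast (ZMod.isUnit_iff_coprime 2 n).mpr (Nat.coprime_two_left.mpr hn)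
  obtain ⟨half, hhalf⟩ := htwo.exists_right_inv
  have hhalf_unit : IsUnit half := IsUnit.of_mul_eq_one_right _ hhalf
  refine ⟨half * (x.cast + c : ℤ), half * (x.cast - c : ℤ),
    hhalf_unit.mul (hunit _ fun p hp hpn => (not_dvd_add_and_not_dvd_sub (hc p hp hpn)).1),
    hhalf_unit.mul (hunit _ fun p hp hpn => (not_dvd_add_and_not_dvd_sub (hc p hp hpn)).2), ?_⟩
  push_cast
  linear_combination (x : ZMod n) * hhalf

theorem sum_of_at_most_two_coprime_general (t s : ℕ) (ht : Odd t)
    (hs : t ≤ s) :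
    Nat.gcd s t = 1 ∨
      ∃ a b : ℕ, 0 < a ∧ 0 < b ∧ a + b = s ∧
        Nat.gcd a t = 1 ∧ Nat.gcd b t = 1 := by
  rcases eq_or_ne t 1 with rfl | ht1
  · exact Or.inl (Nat.gcd_one_right s)
  right
  have : NeZero t := ⟨ht.pos.ne'⟩
  have : Nontrivial (ZMod t) := ZMod.nontrivial_iff.mpr ht1
  obtain ⟨u, v, hu, hv, huv⟩ := ZMod.exists_isUnit_add_isUnit_eq ht (s : ZMod t)
  have hut : u.val < s := (ZMod.val_lt u).trans_le hs
  refine ⟨u.val, s - u.val, ZMod.val_pos.mpr hu.ne_zero, by omega, by omega, ?_, ?_⟩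
  · rwa [← Nat.Coprime, ← ZMod.isUnit_iff_coprime, ZMod.natCast_zmod_val]
  · rwa [← Nat.Coprime, ← ZMod.isUnit_iff_coprime, Nat.cast_sub hut.le, ZMod.natCast_zmod_val,
      ← huv, add_sub_cancel_left]

theorem sum_of_at_most_two_coprime (t s : ℕ) (ht : Odd t) (ht1 : 1 ≤ t)
    (hs : t ≤ s) :
    Nat.gcd s t = 1 ∨
      ∃ a b : ℕ, 0 < a ∧ 0 < b ∧ a + b = s ∧
        Nat.gcd a t = 1 ∧ Nat.gcd b t = 1 :=
  sum_of_at_most_two_coprime_general t s ht hs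
end

section
/- Let t be an even positive natural number and let s be a natural number with s ≥ 2t. Then s can be written as a sum of at most three positive natural numbers each coprime to t. -/
/-! Writing `s = 1 + (s - 1)` when `s` is odd, it suffices to split an even `s ≥ t` into two
positive summands coprime to `t`. Modulo `t` this is the statement that `s` is a sum of two
units of `ZMod t`, which by the Chinese remainder theorem reduces to prime powers `p ^ k`. There
a residue is a unit iff its image in `ZMod p` is nonzero, and every element of `ZMod p` is a sum
of two nonzero ones: for odd `p` pick anything outside `{0, s}`, for `p = 2` use `0 = 1 + 1`,
which is where the evenness of `s` enters. Reducing the first summand into `[1, t)` keeps the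
second one positive since `t ≤ s`. -/

theorem exists_ne_zero_add_eq {G : Type*} [AddCommGroup G] [Fintype G]
    (hG : 2 < Fintype.card G) (y : G) : ∃ a b : G, a ≠ 0 ∧ b ≠ 0 ∧ a + b = y := by
  classical
  obtain ⟨a, -, ha⟩ : ∃ a ∈ Finset.univ, a ∉ ({0, y} : Finset G) :=
    Finset.exists_mem_notMem_of_card_lt_card
      (Finset.card_le_two.trans_lt (by rwa [Finset.card_univ]))
  simp only [Finset.mem_insert, Finset.mem_singleton, not_or] at ha
  exact ⟨a, y - a, ha.1, sub_ne_zero.2 (Ne.symm ha.2), add_sub_cancel a y⟩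

namespace ZMod

theorem isUnit_iff_castHom_ne_zero {p k : ℕ} (hp : p.Prime) (hk : 0 < k) (x : ZMod (p ^ k)) :
    IsUnit x ↔ castHom (dvd_pow_self p hk.ne') (ZMod p) x ≠ 0 := by
  have : NeZero (p ^ k) := ⟨pow_ne_zero k hp.ne_zero⟩
  rw [← natCast_zmod_val x, isUnit_natCast_iff_not_dvd_pow hp hk, map_natCast, Ne,
    natCast_eq_zero_iff]

theorem exists_isUnit_add_eq_natCast_of_prime_pow {p k : ℕ} (hp : p.Prime) (hk : 0 < k)
    (s : ℕ) (hs : p = 2 → Even s) :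
    ∃ a b : ZMod (p ^ k), IsUnit a ∧ IsUnit b ∧ a + b = s := by
  have : Fact p.Prime := ⟨hp⟩
  obtain ⟨a₀, b₀, ha₀, hb₀, hab₀⟩ : ∃ a₀ b₀ : ZMod p, a₀ ≠ 0 ∧ b₀ ≠ 0 ∧ a₀ + b₀ = s := by
    rcases eq_or_ne p 2 with rfl | hp2
    · exact ⟨1, 1, one_ne_zero, one_ne_zero, by
        rw [natCast_eq_zero_iff_even.2 (hs rfl)]; rfl⟩
    · exact exists_ne_zero_add_eq (by rw [card]; exact lt_of_le_of_ne hp.two_le (Ne.symm hp2)) _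
  obtain ⟨a, rfl⟩ := castHom_surjective (dvd_pow_self p hk.ne') a₀
  refine ⟨a, s - a, (isUnit_iff_castHom_ne_zero hp hk a).2 ha₀,
    (isUnit_iff_castHom_ne_zero hp hk _).2 ?_, add_sub_cancel a _⟩
  rwa [map_sub, map_natCast, ← hab₀, add_sub_cancel_left]

theorem exists_isUnit_add_eq_natCast_mul {m n : ℕ} (hmn : m.Coprime n) (s : ℕ)
    (hm : ∃ a b : ZMod m, IsUnit a ∧ IsUnit b ∧ a + b = s)
    (hn : ∃ a b : ZMod n, IsUnit a ∧ IsUnit b ∧ a + b = s) :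
    ∃ a b : ZMod (m * n), IsUnit a ∧ IsUnit b ∧ a + b = s := by
  obtain ⟨a₁, b₁, ha₁, hb₁, hab₁⟩ := hm
  obtain ⟨a₂, b₂, ha₂, hb₂, hab₂⟩ := hn
  let e := (chineseRemainder hmn).symm
  refine ⟨e (a₁, a₂), e (b₁, b₂), (Prod.isUnit_iff.2 ⟨ha₁, ha₂⟩).map e,
    (Prod.isUnit_iff.2 ⟨hb₁, hb₂⟩).map e, ?_⟩
  rw [← map_add, Prod.mk_add_mk, hab₁, hab₂, ← map_natCast e]
  rfl

theorem exists_isUnit_add_eq_natCast {n : ℕ} (hn : n ≠ 0) (s : ℕ) (hs : Even n → Even s) :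
    ∃ a b : ZMod n, IsUnit a ∧ IsUnit b ∧ a + b = s := by
  induction n using Nat.recOnPosPrimePosCoprime with
  | prime_pow p k hp hk =>
    exact exists_isUnit_add_eq_natCast_of_prime_pow hp hk s
      fun hp2 => hs (hp2 ▸ (Nat.even_pow' hk.ne').2 even_two)
  | zero => exact absurd rfl hn
  | one => exact ⟨0, 0, isUnit_of_subsingleton 0, isUnit_of_subsingleton 0, Subsingleton.elim _ _⟩
  | coprime m n hm hn hmn ihm ihn =>
    exact exists_isUnit_add_eq_natCast_mul hmn s
      (ihm (by omega) fun he => hs (he.mul_right n)) (ihn (by omega) fun he => hs (he.mul_left m))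

end ZMod

theorem Nat.exists_coprime_add_eq {t s : ℕ} (ht : 1 < t) (hts : t ≤ s) (hs : Even t → Even s) :
    ∃ a b : ℕ, 0 < a ∧ 0 < b ∧ a.Coprime t ∧ b.Coprime t ∧ a + b = s := by
  have : NeZero t := ⟨by omega⟩
  have : Fact (1 < t) := ⟨ht⟩
  obtain ⟨a, b, ha, hb, hab⟩ := ZMod.exists_isUnit_add_eq_natCast (by omega) s hs
  have hat : a.val < t := ZMod.val_lt a
  have hb_eq : ((s - a.val : ℕ) : ZMod t) = b := by
    rw [Nat.cast_sub (by omega), ZMod.natCast_zmod_val, ← hab, add_sub_cancel_left]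
  refine ⟨a.val, s - a.val, Nat.pos_of_ne_zero ?_, by omega, ?_, ?_, by omega⟩
  · rw [Ne, ZMod.val_eq_zero]; exact ha.ne_zero
  · rwa [← ZMod.isUnit_iff_coprime, ZMod.natCast_zmod_val]
  · rwa [← ZMod.isUnit_iff_coprime, hb_eq]

theorem sum_of_at_most_three_coprime (t s : ℕ) (ht : Even t) (ht0 : 0 < t)
    (hs : 2 * t ≤ s) :
    ∃ l : List ℕ, l.length ∈ ({1, 2, 3} : Set ℕ) ∧
      (∀ a ∈ l, 0 < a ∧ Nat.gcd a t = 1) ∧ l.sum = s := by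
  have ht1 : 1 < t := by obtain ⟨k, rfl⟩ := ht; omega
  rcases Nat.even_or_odd s with hse | hso
  · obtain ⟨a, b, ha, hb, hat, hbt, rfl⟩ := Nat.exists_coprime_add_eq ht1 (by omega) fun _ => hse
    refine ⟨[a, b], by simp, ?_, by simp⟩
    simp only [List.mem_cons, List.not_mem_nil, or_false]
    rintro x (rfl | rfl)
    exacts [⟨ha, hat⟩, ⟨hb, hbt⟩]
  · obtain ⟨a, b, ha, hb, hat, hbt, hab⟩ := Nat.exists_coprime_add_eq (s := s - 1) ht1
      (by omega) fun _ => Nat.Odd.sub_odd hso odd_one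
    refine ⟨[1, a, b], by simp, ?_, by simp only [List.sum_cons, List.sum_nil]; omega⟩
    simp only [List.mem_cons, List.not_mem_nil, or_false]
    rintro x (rfl | rfl | rfl)
    exacts [⟨one_pos, Nat.gcd_one_left t⟩, ⟨ha, hat⟩, ⟨hb, hbt⟩]
end

section
/- Let t be an odd natural number with t ≥ 1 and let s be a natural number with s ≥ 3t. Then s can be written as a sum of at most two natural numbers, each of which is at least t and coprime to t. -/
lemma key_two_coprime : ∀ t : ℕ, Odd t → ∀ s : ℕ,
    ∃ a b : ℕ, Nat.Coprime a t ∧ Nat.Coprime b t ∧ (a + b) % t = s % t := by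
  intro t
  induction t using Nat.recOnPosPrimePosCoprime with
  | zero => intro h; exact absurd h (by simp)
  | one =>
    intro _ s
    exact ⟨0, 0, Nat.coprime_one_right 0, Nat.coprime_one_right 0, by simp [Nat.mod_one]⟩
  | prime_pow p n hp hn =>
    intro hodd s
    have hp' : p.Prime := hp
    have hpodd : Odd p := by
      rcases hp'.eq_two_or_odd' with h2 | h
      · exfalso
        have h2d : (2 : ℕ) ∣ p ^ n := h2 ▸ dvd_pow_self p hn.ne'
        exact (Nat.not_even_iff_odd.mpr hodd) ((even_iff_two_dvd).mpr h2d)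
      · exact h
    have hpne2 : p ≠ 2 := by rintro rfl; exact (by norm_num : ¬ Odd 2) hpodd
    have hp3 : 3 ≤ p := by have := hp'.two_le; omega
    set r := s % p ^ n with hr
    have hrlt : r < p ^ n := Nat.mod_lt _ (Nat.pow_pos (n := n) hp'.pos)
    have hpn3 : 3 ≤ p ^ n := le_trans hp3 (Nat.le_self_pow hn.ne' p)
    set a : ℕ := if r % p = 1 then 2 else 1 with ha
    clear_value a
    have hav : a = 2 ∨ a = 1 := by rw [ha]; split <;> simp
    have ha2 : a ≤ 2 := by rcases hav with h | h <;> simp [h]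
    have ha1 : 1 ≤ a := by rcases hav with h | h <;> simp [h]
    have hale : a ≤ r + p ^ n := le_trans ha2 (le_trans (by omega) (Nat.le_add_left _ r))
    have hab : a + (r + p ^ n - a) = r + p ^ n := Nat.add_sub_cancel' hale
    refine ⟨a, r + p ^ n - a, ?_, ?_, ?_⟩
    · rcases hav with h | h
      · rw [h]; exact (Nat.coprime_two_left.mpr hpodd).pow_right n
      · rw [h]; exact Nat.coprime_one_left _
    · rw [Nat.coprime_pow_right_iff hn, Nat.coprime_comm, hp'.coprime_iff_not_dvd]
      intro hdvd
      obtain ⟨k, hk⟩ := hdvd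
      obtain ⟨m, hm⟩ := dvd_pow_self p hn.ne'
      have hreq : r + p * m = p * k + a := by omega
      have hmodeq : r % p = a % p := by
        have : (r + p * m) % p = (p * k + a) % p := by rw [hreq]
        simpa [Nat.add_mul_mod_self_left, Nat.mul_add_mod] using this
      have hap : a % p = a := Nat.mod_eq_of_lt (by omega)
      rcases eq_or_ne (r % p) 1 with h | h
      · have h2 : a = 2 := by rw [ha, if_pos h]
        omega
      · have h2 : a = 1 := by rw [ha, if_neg h]
        omega
    · rw [hab, Nat.add_mod_right, hr, Nat.mod_mod_of_dvd _ dvd_rfl]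
  | coprime a b ha1 hb1 hco iha ihb =>
    intro hodd s
    rw [Nat.odd_mul] at hodd
    obtain ⟨a1, b1, hca1, hcb1, hm1⟩ := iha hodd.1 s
    obtain ⟨a2, b2, hca2, hcb2, hm2⟩ := ihb hodd.2 s
    obtain ⟨A, hA1, hA2⟩ := Nat.chineseRemainder hco a1 a2
    obtain ⟨B, hB1, hB2⟩ := Nat.chineseRemainder hco b1 b2
    refine ⟨A, B, ?_, ?_, ?_⟩
    · exact Nat.Coprime.mul_right
        (by rw [Nat.coprime_comm, Nat.Coprime, Nat.gcd_rec, hA1, ← Nat.gcd_rec, ← Nat.Coprime, Nat.coprime_comm]; exact hca1)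
        (by rw [Nat.coprime_comm, Nat.Coprime, Nat.gcd_rec, hA2, ← Nat.gcd_rec, ← Nat.Coprime, Nat.coprime_comm]; exact hca2)
    · exact Nat.Coprime.mul_right
        (by rw [Nat.coprime_comm, Nat.Coprime, Nat.gcd_rec, hB1, ← Nat.gcd_rec, ← Nat.Coprime, Nat.coprime_comm]; exact hcb1)
        (by rw [Nat.coprime_comm, Nat.Coprime, Nat.gcd_rec, hB2, ← Nat.gcd_rec, ← Nat.Coprime, Nat.coprime_comm]; exact hcb2)
    · have h1 : (A + B) ≡ s [MOD a] :=
        (Nat.ModEq.add hA1 hB1).trans hm1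
      have h2 : (A + B) ≡ s [MOD b] :=
        (Nat.ModEq.add hA2 hB2).trans hm2
      exact (Nat.modEq_and_modEq_iff_modEq_mul hco).mp ⟨h1, h2⟩

theorem sum_of_at_most_two_coprime_ge (t s : ℕ) (ht : Odd t) (ht1 : 1 ≤ t)
    (hs : 3 * t ≤ s) :
    (Nat.gcd s t = 1 ∧ t ≤ s) ∨
      ∃ a b : ℕ, t ≤ a ∧ t ≤ b ∧ a + b = s ∧
        Nat.gcd a t = 1 ∧ Nat.gcd b t = 1 := by
  obtain ⟨a, b, hca, hcb, hmod⟩ := key_two_coprime t ht s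
  right
  set A := a % t + t with hA
  have hAlt : A < 2 * t := by
    have := Nat.mod_lt a (show 0 < t by omega)
    omega
  have hAle : A ≤ s := by omega
  have h1 : A ≡ a [MOD t] := by
    show A % t = a % t
    rw [hA, Nat.add_mod_right, Nat.mod_mod_of_dvd _ dvd_rfl]
  have h2 : A + (s - A) = s := by omega
  have h3 : A + (s - A) ≡ a + b [MOD t] := by
    show (A + (s - A)) % t = (a + b) % t
    rw [h2, hmod]
  have h4 : s - A ≡ b [MOD t] := h1.add_left_cancel h3
  refine ⟨A, s - A, by omega, by omega, h2, ?_, ?_⟩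
  · rw [Nat.gcd_comm, Nat.gcd_rec, h1, ← Nat.gcd_rec, Nat.gcd_comm]; exact hca
  · rw [Nat.gcd_comm, Nat.gcd_rec, h4, ← Nat.gcd_rec, Nat.gcd_comm]; exact hcb
end

section
/- Let t be an even positive natural number and let s be a natural number with s ≥ 5t. Then s can be written as a sum of at most three positive natural numbers, each of which is at least t and coprime to t. -/
private lemma gcd_eq_of_mod_eq {c c' t : ℕ} (h : c % t = c' % t) :
    Nat.gcd c t = Nat.gcd c' t := by
  rw [Nat.gcd_comm c t, Nat.gcd_comm c' t, Nat.gcd_rec t c, Nat.gcd_rec t c', h]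

/-- Key lemma: if `t > 0` and (`2 ∣ t → 2 ∣ s`), there exist `c d` coprime to `t`
with `c + d ≡ s (mod t)`. -/
private lemma exists_two_coprime_mod (t : ℕ) :
    0 < t → ∀ s : ℕ, (2 ∣ t → 2 ∣ s) →
      ∃ c d : ℕ, Nat.gcd c t = 1 ∧ Nat.gcd d t = 1 ∧ (c + d) % t = s % t := by
  induction t using Nat.recOnPosPrimePosCoprime with
  | zero => exact fun h => absurd h (lt_irrefl 0)
  | one =>
    intro _ s _
    exact ⟨0, 0, by simp, by simp, by omega⟩
  | prime_pow p n hp hn =>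
    intro _ s hpar
    have hpt : p ∣ p ^ n := dvd_pow_self p hn.ne'
    have hp' : Nat.Prime p := hp
    rcases eq_or_ne p 2 with hp2 | hp2
    · -- p = 2
      subst hp2
      have h2s : 2 ∣ s := hpar hpt
      have ht2 : 2 ≤ 2 ^ n := Nat.one_lt_two_pow_iff.mpr hn.ne'
      refine ⟨1, s + 2 ^ n - 1, by simp, ?_, ?_⟩
      · have hodd : ¬ 2 ∣ (s + 2 ^ n - 1) := by
          have h2t : 2 ∣ 2 ^ n := hpt
          omega
        exact ((Nat.Prime.coprime_iff_not_dvd Nat.prime_two).mpr hodd).symm.pow_right n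
      · have : 1 + (s + 2 ^ n - 1) = s + 2 ^ n := by omega
        rw [this, Nat.add_mod_right]
    · -- p odd
      have hp3 : 3 ≤ p := by
        have := hp'.two_le
        omega
      have ht3 : 3 ≤ p ^ n := le_trans hp3 (Nat.le_self_pow hn.ne' p)
      by_cases hd1 : p ∣ (s + 2 * p ^ n - 1)
      · refine ⟨2, s + 2 * p ^ n - 2, ?_, ?_, ?_⟩
        · exact ((Nat.Prime.coprime_iff_not_dvd hp').mpr
            (fun h => absurd (Nat.le_of_dvd two_pos h) (by omega))).symm.pow_right n
        · refine Nat.Coprime.pow_right n (Nat.Coprime.symm ((Nat.Prime.coprime_iff_not_dvd hp').mpr ?_))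
          intro hd2
          have := Nat.dvd_sub hd1 hd2
          have h1 : (s + 2 * p ^ n - 1) - (s + 2 * p ^ n - 2) = 1 := by omega
          rw [h1] at this
          exact absurd (Nat.le_of_dvd one_pos this) (by omega)
        · have : 2 + (s + 2 * p ^ n - 2) = s + 2 * p ^ n := by omega
          rw [this]; simp [Nat.add_mul_mod_self_right]
      · refine ⟨1, s + 2 * p ^ n - 1, by simp, ?_, ?_⟩
        · exact ((Nat.Prime.coprime_iff_not_dvd hp').mpr hd1).symm.pow_right n
        · have : 1 + (s + 2 * p ^ n - 1) = s + 2 * p ^ n := by omega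
          rw [this]; simp [Nat.add_mul_mod_self_right]
  | coprime a b ha hb hab iha ihb =>
    intro _ s hpar
    obtain ⟨c₁, d₁, hc₁, hd₁, h₁⟩ := iha (by omega) s
      (fun h => hpar (Dvd.dvd.mul_right h b))
    obtain ⟨c₂, d₂, hc₂, hd₂, h₂⟩ := ihb (by omega) s
      (fun h => hpar (Dvd.dvd.mul_left h a))
    obtain ⟨c, hc⟩ := Nat.chineseRemainder hab c₁ c₂
    obtain ⟨d, hd⟩ := Nat.chineseRemainder hab d₁ d₂
    refine ⟨c, d, ?_, ?_, ?_⟩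
    · exact Nat.Coprime.mul_right
        ((gcd_eq_of_mod_eq hc.1).trans hc₁)
        ((gcd_eq_of_mod_eq hc.2).trans hc₂)
    · exact Nat.Coprime.mul_right
        ((gcd_eq_of_mod_eq hd.1).trans hd₁)
        ((gcd_eq_of_mod_eq hd.2).trans hd₂)
    · have ha' : (c + d) ≡ s [MOD a] := (Nat.ModEq.add hc.1 hd.1).trans h₁
      have hb' : (c + d) ≡ s [MOD b] := (Nat.ModEq.add hc.2 hd.2).trans h₂
      exact (Nat.modEq_and_modEq_iff_modEq_mul hab).mp ⟨ha', hb'⟩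

private lemma exists_two_summands (t s : ℕ) (ht0 : 0 < t) (hpar : 2 ∣ t → 2 ∣ s)
    (hs : 3 * t ≤ s) :
    ∃ a b : ℕ, t ≤ a ∧ Nat.gcd a t = 1 ∧ t ≤ b ∧ Nat.gcd b t = 1 ∧ a + b = s := by
  obtain ⟨c, d, hc, hd, hcd⟩ := exists_two_coprime_mod t ht0 s hpar
  set a := c % t + t with ha_def
  have hamod : a % t = c % t := by
    rw [ha_def, Nat.add_mod_right]; exact Nat.mod_mod_of_dvd c dvd_rfl
  have hga : Nat.gcd a t = 1 := (gcd_eq_of_mod_eq hamod).trans hc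
  have halt : a < 2 * t := by
    have := Nat.mod_lt c ht0
    omega
  have hale : a ≤ s := by omega
  set b := s - a with hb_def
  have hab : a + b = s := by omega
  have hbt : t ≤ b := by omega
  have hmodeq : b ≡ d [MOD t] := by
    have h1 : a + b ≡ c + d [MOD t] := by
      unfold Nat.ModEq
      rw [hab, hcd]
    have h2 : a ≡ c [MOD t] := hamod
    exact h2.add_left_cancel h1
  have hgb : Nat.gcd b t = 1 := (gcd_eq_of_mod_eq hmodeq).trans hd
  exact ⟨a, b, by omega, hga, hbt, hgb, hab⟩

theorem sum_of_at_most_three_coprime_ge (t s : ℕ) (ht : Even t) (ht0 : 0 < t)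
    (hs : 5 * t ≤ s) :
    ∃ l : List ℕ, l.length ∈ ({1, 2, 3} : Set ℕ) ∧
      (∀ a ∈ l, t ≤ a ∧ Nat.gcd a t = 1) ∧ l.sum = s := by
  have ht2 : 2 ∣ t := ht.two_dvd
  rcases Nat.even_or_odd s with hse | hso
  · obtain ⟨a, b, hat, hga, hbt, hgb, hab⟩ :=
      exists_two_summands t s ht0 (fun _ => hse.two_dvd) (by omega)
    refine ⟨[a, b], by simp, ?_, by simp [hab]⟩
    intro x hx
    simp only [List.mem_cons, List.not_mem_nil, or_false] at hx
    rcases hx with rfl | rfl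
    · exact ⟨hat, hga⟩
    · exact ⟨hbt, hgb⟩
  · have htle : t + 1 ≤ s := by omega
    set s' := s - (t + 1) with hs'_def
    have hs'par : 2 ∣ s' := by
      obtain ⟨k, hk⟩ := hso
      obtain ⟨m, hm⟩ := ht2
      omega
    obtain ⟨a, b, hat, hga, hbt, hgb, hab⟩ :=
      exists_two_summands t s' ht0 (fun _ => hs'par) (by omega)
    have hg1 : Nat.gcd (t + 1) t = 1 := by
      simpa using Nat.coprime_succ_self_left (n := t)
    refine ⟨[t + 1, a, b], by simp, ?_, by simp; omega⟩
    intro x hx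
    simp only [List.mem_cons, List.not_mem_nil, or_false] at hx
    rcases hx with rfl | rfl | rfl
    · exact ⟨by omega, hg1⟩
    · exact ⟨hat, hga⟩
    · exact ⟨hbt, hgb⟩
end
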